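/- Let d = 2h, let r_0, c_0 be binary hypervectors of dimension d, let x > 0 be a natural number, and define r_i = r_0 + 1_{{t : (t:ℕ) < i·x}} for i·x ≤ h and c_j = c_0 + 1_{{t : h ≤ (t:ℕ) < h + j·x}} for j·x ≤ h, with position hypervectors p_{(i,j)} = r_i ⊕ c_j. Then for all i, j and all natural numbers m0, n0, m1, n1 such that all indices stay in the valid range, d_H(p_{(i,j)}, p_{(i+m0, j+n0)}) = d_H(p_{(i,j)}, p_{(i+m1, j+n1)}) if and only if m0 + n0 = m1 + n1; i.e., the encoding follows the Manhattan distance. -/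
import Mathlib


open Finset

/-- The flip hypervector of a set of coordinates: `1` on `S`, `0` elsewhere. -/
def flipVec {d : ℕ} (S : Finset (Fin d)) : Fin d → ZMod 2 := fun i => if i ∈ S then 1 else 0

/-- Row hypervector `r_i`: flip the first `i · x` coordinates of `r_0`. -/
def rowHV {d : ℕ} (r0 : Fin d → ZMod 2) (x i : ℕ) : Fin d → ZMod 2 :=
  r0 + flipVec (univ.filter fun t : Fin d => (t : ℕ) < i * x)

/-- Column hypervector `c_j`: flip the `j · x` coordinates starting at position `h`. -/
def colHV {d : ℕ} (c0 : Fin d → ZMod 2) (h x j : ℕ) : Fin d → ZMod 2 :=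
  c0 + flipVec (univ.filter fun t : Fin d => h ≤ (t : ℕ) ∧ (t : ℕ) < h + j * x)


lemma cnt_interval {d a b : ℕ} (hb : b ≤ d) :
    (univ.filter fun t : Fin d => a ≤ (t:ℕ) ∧ (t:ℕ) < b).card = b - a := by
  rw [Finset.card_filter]
  rw [Fin.sum_univ_eq_sum_range (fun t => if a ≤ t ∧ t < b then 1 else 0)]
  rw [← Finset.card_filter]
  rw [show (Finset.range d).filter (fun t => a ≤ t ∧ t < b) = Finset.Ico a b by
    ext t; simp [Finset.mem_Ico]; omega]
  exact Nat.card_Ico a b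

lemma key_dist (h d : ℕ) (hd : d = 2 * h) (r0 c0 : Fin d → ZMod 2) (x i j m n : ℕ)
    (hr : (i + m) * x ≤ h) (hc : (j + n) * x ≤ h) :
    hammingDist (rowHV r0 x i + colHV c0 h x j)
      (rowHV r0 x (i + m) + colHV c0 h x (j + n)) = m * x + n * x := by
  have hAB : i * x ≤ (i + m) * x := Nat.mul_le_mul_right x (Nat.le_add_right i m)
  have hCD : j * x ≤ (j + n) * x := Nat.mul_le_mul_right x (Nat.le_add_right j n)
  unfold hammingDist
  have hset : (univ.filter fun t : Fin d =>
      (rowHV r0 x i + colHV c0 h x j) t ≠ (rowHV r0 x (i + m) + colHV c0 h x (j + n)) t) =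
      (univ.filter fun t : Fin d => i * x ≤ (t:ℕ) ∧ (t:ℕ) < (i + m) * x) ∪
      (univ.filter fun t : Fin d => h + j * x ≤ (t:ℕ) ∧ (t:ℕ) < h + (j + n) * x) := by
    ext t
    simp only [mem_filter, mem_union, mem_univ, true_and, rowHV, colHV, flipVec,
      Pi.add_apply, mem_filter, mem_univ, true_and]
    generalize i * x = A at *
    generalize (i + m) * x = B at *
    generalize j * x = C at *
    generalize (j + n) * x = D at *
    by_cases h1 : (t:ℕ) < A <;> by_cases h2 : (t:ℕ) < B <;>
      by_cases h3 : h ≤ (t:ℕ) ∧ (t:ℕ) < h + C <;> by_cases h4 : h ≤ (t:ℕ) ∧ (t:ℕ) < h + D <;>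
      simp [h1, h2, h3, h4] <;> ring_nf <;> first | decide | omega
  rw [hset, Finset.card_union_of_disjoint, cnt_interval (by omega), cnt_interval (by omega)]
  · have e1 : (i + m) * x = i * x + m * x := add_mul i m x
    have e2 : (j + n) * x = j * x + n * x := add_mul j n x
    omega
  · rw [Finset.disjoint_filter]
    rintro t _ ⟨_, h2⟩ ⟨h3, _⟩
    omega

/-- With `d = 2h`, `x > 0`, rows flipping in the first half and columns in the second half,
the position hypervectors `p_(i,j) = r_i ⊕ c_j` follow the Manhattan distance:
`d_H(p_(i,j), p_(i+m0,j+n0)) = d_H(p_(i,j), p_(i+m1,j+n1))` iff `m0 + n0 = m1 + n1`,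
for all indices staying in the valid range. -/
theorem stmt7 (h d : ℕ) (hd : d = 2 * h) (r0 c0 : Fin d → ZMod 2) (x : ℕ) (hx : 0 < x)
    (i j m0 n0 m1 n1 : ℕ)
    (hi : i * x ≤ h) (hj : j * x ≤ h)
    (h0r : (i + m0) * x ≤ h) (h0c : (j + n0) * x ≤ h)
    (h1r : (i + m1) * x ≤ h) (h1c : (j + n1) * x ≤ h) :
    hammingDist (rowHV r0 x i + colHV c0 h x j)
        (rowHV r0 x (i + m0) + colHV c0 h x (j + n0)) =
      hammingDist (rowHV r0 x i + colHV c0 h x j)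
        (rowHV r0 x (i + m1) + colHV c0 h x (j + n1)) ↔
      m0 + n0 = m1 + n1 := by
  rw [key_dist h d hd r0 c0 x i j m0 n0 h0r h0c,
    key_dist h d hd r0 c0 x i j m1 n1 h1r h1c, ← add_mul, ← add_mul]
  constructor
  · exact fun hmn => Nat.eq_of_mul_eq_mul_right hx hmn
  · exact fun hmn => by rw [hmn]
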